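/- Theorem 4.1 (power boundedness / Von Neumann stability): Fix reals h > 0, Δt with 0 < Δt < h, k, and c^e ≥ 0, c^o ≥ 0. Let E : ℝ → ℝ be E(c) = (exp(c) − 1)/c for c ≠ 0 and E(0) = 1; set d^e = exp(−c^e·Δt/2), d^o = exp(−c^o·Δt/2), f^e = −i·(Δt/h)·E(−c^e·Δt/2)·sin(k·h/2), f^o = −i·(Δt/h)·E(−c^o·Δt/2)·sin(k·h/2), and let G be the 2×2 complex matrix [[(d^e)² + (d^e+1)·f^e·f^o, d^o·(d^e+1)·f^e],[(d^o + (d^e)²)·f^o + (d^e+1)·f^e·(f^o)², (d^o)² + d^o·(d^e+1)·f^e·f^o]]. Then G is power-bounded: there exists a constant C such that ‖Gⁿ‖ ≤ C for all natural numbers n. -/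

import Mathlib

/-!
Write `xₑ = cₑΔt/2`, `xₒ = cₒΔt/2` and `σ = (Δt/h) sin (kh/2)`, so that `σ² < 1` and
`fₑfₒ = -β` with `β = σ² E(-xₑ) E(-xₒ) ≥ 0`. The trace of `G` is the real number
`τ = dₑ² + dₒ² - (1 + dₑ)(1 + dₒ)β` and its determinant is `δ = (dₑdₒ)²`, so the eigenvalues of
`G` are the roots of the real quadratic `λ² - τλ + δ`. The Schur–Cohn conditions `δ ≤ 1`,
`|τ| ≤ 1 + δ` put both roots in the closed unit disk; the lower bound `-(1 + δ) ≤ τ` comes from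
`(1 + eᶜ) E(c) ≤ 1 + e²ᶜ`, a consequence of the Hermite–Hadamard inequality
`E(c) = ∫₀¹ eᶜˢ ds ≤ (1 + eᶜ) / 2`. A double eigenvalue on the unit circle only occurs without
damping and with `σ = 0`, where `G = 1`. Otherwise the powers are controlled by
`(a - b) Gⁿ = aⁿ (G - b) - bⁿ (G - a)` for distinct eigenvalues `a ≠ b`, and by
`Gⁿ⁺¹ = aⁿ⁺¹ + (n + 1) aⁿ (G - a)` for a double eigenvalue `a` with `‖a‖ < 1`.
-/

open Matrix

attribute [local instance] Matrix.linftyOpNormedRing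

noncomputable def E : ℝ → ℝ := fun c => if c = 0 then 1 else (Real.exp c - 1) / c

attribute [local instance] Matrix.linftyOpNormedAlgebra

open Real

def IsPowerBounded {A : Type*} [SeminormedRing A] (x : A) : Prop :=
  ∃ C : ℝ, ∀ n : ℕ, ‖x ^ n‖ ≤ C

section Algebra

variable {R A : Type*} [CommRing R] [Ring A] [Algebra R A] {x : A} {a b : R}

theorem mul_sub_smul_one_eq_of_mul_eq_zero (h : (x - a • 1) * (x - b • 1) = 0) :
    x * (x - b • 1) = a • (x - b • 1) := by
  rw [← sub_eq_zero, ← h, sub_mul, smul_mul_assoc, one_mul]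

theorem sub_smul_one_mul_comm : (x - a • 1) * (x - b • 1) = (x - b • 1) * (x - a • 1) := by
  simp only [sub_mul, mul_sub, smul_mul_assoc, mul_smul_comm, one_mul, mul_one]
  module

theorem sub_smul_pow_eq_of_mul_eq_zero (h : (x - a • 1) * (x - b • 1) = 0) (n : ℕ) :
    (a - b) • x ^ n = a ^ n • (x - b • 1) - b ^ n • (x - a • 1) := by
  induction n with
  | zero => simp only [pow_zero, one_smul, sub_smul]; abel
  | succ n ih =>
    rw [pow_succ', ← mul_smul_comm, ih, mul_sub, mul_smul_comm, mul_smul_comm,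
      mul_sub_smul_one_eq_of_mul_eq_zero h,
      mul_sub_smul_one_eq_of_mul_eq_zero (sub_smul_one_mul_comm.symm.trans h), smul_smul,
      smul_smul, ← pow_succ, ← pow_succ]

theorem pow_succ_eq_of_sub_sq_eq_zero (h : (x - a • 1) ^ 2 = 0) (n : ℕ) :
    x ^ (n + 1) = a ^ (n + 1) • 1 + (n + 1) • a ^ n • (x - a • 1) := by
  induction n with
  | zero => simp
  | succ n ih =>
    obtain ⟨N, rfl⟩ : ∃ N, x = a • 1 + N := ⟨x - a • 1, by abel⟩
    simp only [add_sub_cancel_left] at h ih ⊢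
    rw [pow_succ, ih]
    simp only [mul_add, add_mul, smul_mul_assoc, mul_smul_comm, one_mul, mul_one, ← sq, h,
      smul_zero, add_zero]
    module

end Algebra

section PowerBounded

variable {𝕜 A : Type*} [NormedField 𝕜] [SeminormedRing A] [NormedAlgebra 𝕜 A] {x : A} {a b : 𝕜}

theorem isPowerBounded_smul_one (ha : ‖a‖ ≤ 1) : IsPowerBounded (a • 1 : A) :=
  ⟨‖(1 : A)‖, fun n => by
    rw [smul_pow, one_pow, norm_smul, norm_pow]
    exact mul_le_of_le_one_left (norm_nonneg _) (pow_le_one₀ (norm_nonneg a) ha)⟩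

theorem isPowerBounded_of_mul_eq_zero_of_ne (h : (x - a • 1) * (x - b • 1) = 0) (hab : a ≠ b)
    (ha : ‖a‖ ≤ 1) (hb : ‖b‖ ≤ 1) : IsPowerBounded x := by
  refine ⟨(‖x - b • 1‖ + ‖x - a • 1‖) / ‖a - b‖, fun n => ?_⟩
  rw [le_div_iff₀ (norm_pos_iff.2 (sub_ne_zero.2 hab)), mul_comm, ← norm_smul,
    sub_smul_pow_eq_of_mul_eq_zero h]
  refine (norm_sub_le _ _).trans (add_le_add ?_ ?_) <;> rw [norm_smul, norm_pow] <;>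
    exact mul_le_of_le_one_left (norm_nonneg _) (pow_le_one₀ (norm_nonneg _) ‹_›)

theorem isPowerBounded_of_sub_sq_eq_zero (h : (x - a • 1) ^ 2 = 0) (ha : ‖a‖ < 1) :
    IsPowerBounded x := by
  obtain ⟨B, hB⟩ : BddAbove (Set.range fun n : ℕ => (n + 1) * ‖a‖ ^ n) := by
    have := (tendsto_self_mul_const_pow_of_lt_one (norm_nonneg a) ha).add
      (tendsto_pow_atTop_nhds_zero_of_lt_one (norm_nonneg a) ha)
    simpa [add_mul] using this.bddAbove_range
  have hB' (n : ℕ) : (n + 1) * ‖a‖ ^ n ≤ B := hB ⟨n, rfl⟩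
  refine ⟨‖(1 : A)‖ + B * ‖x - a • 1‖, fun n => ?_⟩
  cases n with
  | zero => simpa using mul_nonneg ((zero_le_one' ℝ).trans (by simpa using hB' 0)) (norm_nonneg _)
  | succ n =>
    rw [pow_succ_eq_of_sub_sq_eq_zero h]
    refine (norm_add_le _ _).trans (add_le_add ?_ ?_)
    · rw [norm_smul, norm_pow]
      exact mul_le_of_le_one_left (norm_nonneg _) (pow_le_one₀ (norm_nonneg a) ha.le)
    · calc ‖(n + 1) • a ^ n • (x - a • 1)‖ ≤ (n + 1) * (‖a‖ ^ n * ‖x - a • 1‖) := by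
            simpa [norm_smul] using norm_nsmul_le (n := n + 1) (a := a ^ n • (x - a • 1))
        _ ≤ B * ‖x - a • 1‖ := by
            rw [← mul_assoc]; exact mul_le_mul_of_nonneg_right (hB' n) (norm_nonneg _)

end PowerBounded

open Polynomial in
theorem Matrix.sub_smul_one_mul_sub_smul_one_eq_zero {R : Type*} [CommRing R] [Nontrivial R]
    (M : Matrix (Fin 2) (Fin 2) R) {a b : R} (hsum : a + b = M.trace) (hprod : a * b = M.det) :
    (M - a • 1) * (M - b • 1) = 0 := by
  have hchar : M.charpoly = (X - C a) * (X - C b) := by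
    rw [charpoly_fin_two, ← hsum, ← hprod, C_add, C_mul]; ring
  simpa [hchar, Algebra.algebraMap_eq_smul_one] using M.aeval_self_charpoly

theorem Complex.norm_le_one_of_add_eq_ofReal_of_mul_eq_ofReal {a b : ℂ} {τ δ : ℝ}
    (hsum : a + b = τ) (hprod : a * b = δ) (hτ : |τ| ≤ 1 + δ) (hδ : δ ≤ 1) : ‖a‖ ≤ 1 := by
  have hre := congrArg re hsum
  have him := congrArg im hsum
  have hre' := congrArg re hprod
  have him' := congrArg im hprod
  simp only [add_re, add_im, mul_re, mul_im, ofReal_re, ofReal_im] at hre him hre' him'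
  rw [← sq_le_one_iff₀ (norm_nonneg a), ← normSq_eq_norm_sq, normSq_apply]
  rw [abs_le] at hτ
  have hbim : b.im = -a.im := by linarith
  rw [hbim] at hre' him'
  by_cases ha : a.im = 0
  · rw [ha] at hre' ⊢
    have h1 : 0 ≤ (1 - a.re) * (1 - b.re) := by nlinarith
    have h2 : 0 ≤ (1 + a.re) * (1 + b.re) := by nlinarith
    have hle : a.re ≤ 1 := by
      by_contra! hgt
      have : 1 ≤ b.re := by nlinarith
      nlinarith
    have hge : -1 ≤ a.re := by
      by_contra! hlt
      have : b.re ≤ -1 := by nlinarith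
      nlinarith
    nlinarith
  · have hbre : b.re = a.re :=
      (sub_eq_zero.1 ((mul_eq_zero.1 (by linear_combination him')).resolve_left ha))
    rw [hbre] at hre'
    linarith

theorem Matrix.isPowerBounded_of_trace_of_det (M : Matrix (Fin 2) (Fin 2) ℂ) {τ δ : ℝ}
    (htr : M.trace = τ) (hdet : M.det = δ) (hτ : |τ| ≤ 1 + δ) (hδ : δ ≤ 1)
    (hcorner : τ ^ 2 = 4 * δ → δ < 1 ∨ M = (τ / 2 : ℂ) • 1) : IsPowerBounded M := by
  obtain ⟨z, hz⟩ := IsAlgClosed.exists_eq_mul_self ((τ : ℂ) ^ 2 - 4 * δ)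
  set a : ℂ := (τ + z) / 2
  set b : ℂ := (τ - z) / 2
  have hsum : a + b = τ := by ring
  have hprod : a * b = δ := by linear_combination hz / 4
  have hM := M.sub_smul_one_mul_sub_smul_one_eq_zero (hsum.trans htr.symm) (hprod.trans hdet.symm)
  have ha := Complex.norm_le_one_of_add_eq_ofReal_of_mul_eq_ofReal hsum hprod hτ hδ
  have hb := Complex.norm_le_one_of_add_eq_ofReal_of_mul_eq_ofReal
    ((add_comm b a).trans hsum) ((mul_comm b a).trans hprod) hτ hδ
  by_cases hab : a = b
  swap
  · exact isPowerBounded_of_mul_eq_zero_of_ne hM hab ha hb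
  have hz0 : z = 0 := by linear_combination hab
  have hτδ : τ ^ 2 = 4 * δ := by
    exact_mod_cast (by linear_combination hz + z * hz0 : (τ : ℂ) ^ 2 = 4 * δ)
  rcases hcorner hτδ with hδ1 | hMa
  · have hnorm : ‖a‖ ^ 2 = δ := by
      rw [← norm_pow, sq]
      nth_rewrite 2 [hab]
      rw [hprod, Complex.norm_real, Real.norm_eq_abs, abs_of_nonneg (by nlinarith)]
    refine isPowerBounded_of_sub_sq_eq_zero (a := a) ?_
      ((sq_lt_one_iff₀ (norm_nonneg a)).1 (hnorm ▸ hδ1))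
    rw [sq]
    nth_rewrite 2 [hab]
    exact hM
  · rw [hMa]
    have ha2 : a = τ / 2 := by simp [a, hz0]
    exact isPowerBounded_smul_one (ha2 ▸ ha)

theorem E_zero : E 0 = 1 := if_pos rfl

theorem E_pos (c : ℝ) : 0 < E c := by
  rw [E]
  split_ifs with hc
  · exact one_pos
  rcases lt_or_gt_of_ne hc with hc | hc
  · exact div_pos_of_neg_of_neg (by simpa using exp_lt_one_iff.2 hc) hc
  · exact div_pos (by simpa using one_lt_exp_iff.2 hc) hc

theorem E_eq_exp_mul_E_neg (c : ℝ) : E c = exp c * E (-c) := by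
  by_cases hc : c = 0
  · simp [E, hc]
  rw [E, E, if_neg hc, if_neg (neg_ne_zero.2 hc), exp_neg]
  field_simp
  ring

theorem two_mul_exp_sub_one_le {t : ℝ} (ht : 0 ≤ t) : 2 * (exp t - 1) ≤ t * (exp t + 1) := by
  let g : ℝ → ℝ := fun t => t * (exp t + 1) - 2 * (exp t - 1)
  have hg (t : ℝ) : HasDerivAt g (1 + (t - 1) * exp t) t :=
    (((hasDerivAt_id' t).mul ((hasDerivAt_exp t).add_const 1)).sub
      (((hasDerivAt_exp t).sub_const 1).const_mul 2)).congr_deriv (by ring)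
  have hmono : Monotone g := monotone_of_deriv_nonneg (fun t => (hg t).differentiableAt)
    fun t => by
      rw [(hg t).deriv]
      have h1 : exp t * exp (-t) = 1 := by rw [← exp_add, add_neg_cancel, exp_zero]
      nlinarith [mul_le_mul_of_nonneg_left (add_one_le_exp (-t)) (exp_pos t).le]
  have := hmono ht
  simp only [g, zero_mul, exp_zero, sub_self, mul_zero] at this
  linarith

theorem E_le_one_add_exp_div_two (c : ℝ) : E c ≤ (1 + exp c) / 2 := by
  wlog hc : 0 ≤ c generalizing c
  · rw [E_eq_exp_mul_E_neg]
    calc exp c * E (-c) ≤ exp c * ((1 + exp (-c)) / 2) :=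
          mul_le_mul_of_nonneg_left (this (-c) (by linarith)) (exp_pos c).le
      _ = (1 + exp c) / 2 := by rw [exp_neg]; field_simp; ring
  rcases hc.eq_or_lt with rfl | hc
  · simp [E]
  rw [E, if_neg hc.ne', div_le_iff₀ hc]
  linarith [two_mul_exp_sub_one_le hc.le]

theorem one_add_exp_mul_E_le (c : ℝ) : (1 + exp c) * E c ≤ 1 + exp c ^ 2 := by
  nlinarith [E_le_one_add_exp_div_two c, exp_pos c, sq_nonneg (1 - exp c)]

def growthMatrix (dE dO : ℝ) (fE fO : ℂ) : Matrix (Fin 2) (Fin 2) ℂ :=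
  !![(dE : ℂ) ^ 2 + ((dE : ℂ) + 1) * fE * fO, (dO : ℂ) * ((dE : ℂ) + 1) * fE;
     ((dO : ℂ) + (dE : ℂ) ^ 2) * fO + ((dE : ℂ) + 1) * fE * fO ^ 2,
     (dO : ℂ) ^ 2 + (dO : ℂ) * ((dE : ℂ) + 1) * fE * fO]

theorem trace_growthMatrix (dE dO : ℝ) (fE fO : ℂ) :
    (growthMatrix dE dO fE fO).trace = dE ^ 2 + dO ^ 2 + (dE + 1) * (dO + 1) * (fE * fO) := by
  rw [growthMatrix, trace_fin_two_of]; ring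

theorem det_growthMatrix (dE dO : ℝ) (fE fO : ℂ) :
    (growthMatrix dE dO fE fO).det = ((dE * dO) ^ 2 : ℝ) := by
  rw [growthMatrix, det_fin_two_of]; push_cast; ring

theorem abs_trace_le_one_add_det {a b σ : ℝ} (ha : a ≤ 0) (hb : b ≤ 0) (hσ : σ ^ 2 ≤ 1) :
    |exp a ^ 2 + exp b ^ 2 - (exp a + 1) * (exp b + 1) * (σ ^ 2 * (E a * E b))| ≤
      1 + (exp a * exp b) ^ 2 := by
  set β := σ ^ 2 * (E a * E b)
  have hβ : 0 ≤ β := mul_nonneg (sq_nonneg σ) (mul_pos (E_pos a) (E_pos b)).le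
  have hβ' : (exp a + 1) * (exp b + 1) * β ≤ (1 + exp a ^ 2) * (1 + exp b ^ 2) :=
    calc (exp a + 1) * (exp b + 1) * β
        = ((1 + exp a) * E a) * ((1 + exp b) * E b) * σ ^ 2 := by ring
      _ ≤ (1 + exp a ^ 2) * (1 + exp b ^ 2) * 1 :=
        mul_le_mul (mul_le_mul (one_add_exp_mul_E_le a) (one_add_exp_mul_E_le b)
          (mul_nonneg (by positivity) (E_pos b).le) (by positivity)) hσ (sq_nonneg σ)
          (by positivity)
      _ = _ := mul_one _
  have hda : 0 ≤ 1 - exp a ^ 2 := by nlinarith [exp_pos a, exp_le_one_iff.2 ha]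
  have hdb : 0 ≤ 1 - exp b ^ 2 := by nlinarith [exp_pos b, exp_le_one_iff.2 hb]
  rw [abs_le]
  constructor
  · nlinarith
  · nlinarith [mul_nonneg hda hdb, mul_nonneg (mul_nonneg (add_nonneg (exp_pos a).le zero_le_one)
      (add_nonneg (exp_pos b).le zero_le_one)) hβ]

theorem isPowerBounded_growthMatrix {a b σ : ℝ} (ha : a ≤ 0) (hb : b ≤ 0) (hσ : σ ^ 2 < 1) :
    IsPowerBounded
      (growthMatrix (exp a) (exp b) (-Complex.I * σ * E a) (-Complex.I * σ * E b)) := by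
  set β := σ ^ 2 * (E a * E b)
  refine Matrix.isPowerBounded_of_trace_of_det _
    (τ := exp a ^ 2 + exp b ^ 2 - (exp a + 1) * (exp b + 1) * β) ?_ (det_growthMatrix ..)
    (abs_trace_le_one_add_det ha hb hσ.le)
    (pow_le_one₀ (by positivity) (mul_le_one₀ (exp_le_one_iff.2 ha) (exp_pos b).le
      (exp_le_one_iff.2 hb))) ?_
  · have hff : -Complex.I * σ * E a * (-Complex.I * σ * E b) = -(β : ℂ) := by
      push_cast [β]
      linear_combination (σ : ℂ) ^ 2 * E a * E b * Complex.I_sq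
    rw [trace_growthMatrix, hff]
    push_cast
    ring
  · intro hτδ
    by_cases hab : a = 0 ∧ b = 0
    · obtain ⟨rfl, rfl⟩ := hab
      right
      simp only [β, exp_zero, E_zero] at hτδ ⊢
      obtain rfl : σ = 0 := pow_eq_zero_iff two_ne_zero |>.1 (by nlinarith [sq_nonneg σ])
      ext i j
      fin_cases i <;> fin_cases j <;> norm_num [growthMatrix]
    · left
      have hab' : a + b < 0 := by
        by_contra!
        exact hab ⟨by linarith, by linarith⟩
      exact pow_lt_one₀ (by positivity) (by rw [← exp_add]; exact exp_lt_one_iff.2 hab')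
        two_ne_zero

/-- Theorem 4.1 (power boundedness / Von Neumann stability): for `0 < Δt < h`
and decay rates `cᵉ, cᵒ ≥ 0`, the full-step growth-factor matrix `G` of the
staggered-grid Strang-splitting scheme is power-bounded: `‖Gⁿ‖ ≤ C` for all `n`. -/
theorem growth_factor_power_bounded (h Δt k cE cO : ℝ)
    (hh : 0 < h) (hΔt : 0 < Δt) (hΔth : Δt < h) (hcE : 0 ≤ cE) (hcO : 0 ≤ cO)
    (dE dO : ℝ) (fE fO : ℂ)
    (hdE : dE = Real.exp (-(cE * Δt / 2)))
    (hdO : dO = Real.exp (-(cO * Δt / 2)))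
    (hfE : fE = -Complex.I * (Δt / h) * E (-(cE * Δt / 2)) * Real.sin (k * h / 2))
    (hfO : fO = -Complex.I * (Δt / h) * E (-(cO * Δt / 2)) * Real.sin (k * h / 2))
    (G : Matrix (Fin 2) (Fin 2) ℂ)
    (hG : G = !![(dE : ℂ) ^ 2 + ((dE : ℂ) + 1) * fE * fO, (dO : ℂ) * ((dE : ℂ) + 1) * fE;
                 ((dO : ℂ) + (dE : ℂ) ^ 2) * fO + ((dE : ℂ) + 1) * fE * fO ^ 2,
                 (dO : ℂ) ^ 2 + (dO : ℂ) * ((dE : ℂ) + 1) * fE * fO]) :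
    ∃ C : ℝ, ∀ n : ℕ, ‖G ^ n‖ ≤ C := by
  set σ := Δt / h * Real.sin (k * h / 2)
  have hσ : σ ^ 2 < 1 := by
    have hΔth' : (Δt / h) ^ 2 < 1 :=
      pow_lt_one₀ (by positivity) ((div_lt_one hh).2 hΔth) two_ne_zero
    rw [mul_pow]
    nlinarith [sin_sq_le_one (k * h / 2), sq_nonneg (Δt / h)]
  have hf (c : ℝ) :
      -Complex.I * (Δt / h) * E c * Real.sin (k * h / 2) = -Complex.I * σ * E c := by
    push_cast [σ]; ring
  subst hG hdE hdO hfE hfO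
  rw [hf, hf]
  exact isPowerBounded_growthMatrix (by nlinarith) (by nlinarith) hσ
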